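/- arXiv:2410.06528 — 2 statements merged into one kernel-verified Lean document; each statement's English description precedes it below -/
import Mathlib

section
/- Let J be a d×d Jordan block with real eigenvalue λ ≠ 0, and let x ∈ ℝ^d have at least one nonzero component. Then the normalized vector J^n x / ‖J^n x‖ converges, up to sign, to the first standard basis vector: min(‖J^n x/‖J^n x‖ − e₁‖, ‖J^n x/‖J^n x‖ + e₁‖) → 0 as n → ∞. -/
/-!
Write `J = N + λ` with `N` the nilpotent shift, so that `(Jⁿ x)ᵢ = ∑ₘ C(n, m) λ^(n-m) x_{i+m}`.
Let `k` be the last index with `x_k ≠ 0`. Since `C(n, m) / C(n, k) → 0` for `m < k`, dividing by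
`cₙ = C(n, k) λ^(n-k) x_k` sends the first coordinate to `1` and every other coordinate to `0`,
i.e. `cₙ⁻¹ Jⁿ x → e₁`. Normalizing `Jⁿ x` instead only loses the sign of `cₙ`.
-/

/-- The `d × d` Jordan block with eigenvalue `lam`. -/
def jordanBlock (d : ℕ) (lam : ℝ) : Matrix (Fin d) (Fin d) ℝ :=
  Matrix.of fun i j => if (j : ℕ) = (i : ℕ) then lam
    else if (j : ℕ) = (i : ℕ) + 1 then 1 else 0

open Filter Topology Finset Matrix

section DistUpToSign

variable {E : Type*} [NormedAddCommGroup E] [NormedSpace ℝ E]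

noncomputable def distUpToSign (e v : E) : ℝ :=
  min ‖NormedSpace.normalize v - e‖ ‖NormedSpace.normalize v + e‖

lemma distUpToSign_neg (e v : E) : distUpToSign e (-v) = distUpToSign e v := by
  rw [distUpToSign, distUpToSign, NormedSpace.normalize_neg, min_comm, ← norm_neg (-_ + e),
    ← norm_neg (-_ - e)]
  congr 2 <;> abel

lemma distUpToSign_smul (e v : E) {c : ℝ} (hc : c ≠ 0) :
    distUpToSign e (c • v) = distUpToSign e v := by
  rcases hc.lt_or_gt with hneg | hpos
  · rw [← neg_neg c, neg_smul, distUpToSign_neg, distUpToSign,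
      NormedSpace.normalize_smul_of_pos (neg_pos.2 hneg)]
    rfl
  · rw [distUpToSign, NormedSpace.normalize_smul_of_pos hpos]
    rfl

lemma continuousAt_distUpToSign {e : E} (he : e ≠ 0) : ContinuousAt (distUpToSign e) e := by
  unfold distUpToSign NormedSpace.normalize
  fun_prop (disch := simpa)

lemma distUpToSign_self {e : E} (he : ‖e‖ = 1) : distUpToSign e e = 0 := by
  simp [distUpToSign, NormedSpace.normalize_eq_self_of_norm_eq_one he]

theorem tendsto_distUpToSign {ι : Type*} {l : Filter ι} {v : ι → E} {c : ι → ℝ} {e : E}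
    (he : ‖e‖ = 1) (hc : ∀ᶠ i in l, c i ≠ 0) (hv : Tendsto (fun i => (c i)⁻¹ • v i) l (𝓝 e)) :
    Tendsto (fun i => distUpToSign e (v i)) l (𝓝 0) := by
  have he0 : e ≠ 0 := norm_ne_zero_iff.1 (he ▸ one_ne_zero)
  have h := (continuousAt_distUpToSign he0).tendsto.comp hv
  rw [distUpToSign_self he] at h
  refine h.congr' ?_
  filter_upwards [hc] with i hi
  exact distUpToSign_smul e _ (inv_ne_zero hi)

end DistUpToSign

lemma tendsto_euclideanSpace_iff {ι α : Type*} [Fintype ι] {f : α → EuclideanSpace ℝ ι}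
    {l : Filter α} {y : EuclideanSpace ℝ ι} :
    Tendsto f l (𝓝 y) ↔ ∀ i, Tendsto (fun a => f a i) l (𝓝 (y i)) := by
  rw [(PiLp.homeomorph 2 _).isInducing.tendsto_nhds_iff, tendsto_pi_nhds]
  rfl

section Binomial

lemma eventually_choose_ne_zero (k : ℕ) : ∀ᶠ n : ℕ in atTop, (n.choose k : ℝ) ≠ 0 := by
  filter_upwards [eventually_ge_atTop k] with n hn
  exact_mod_cast (Nat.choose_pos hn).ne'

lemma tendsto_choose_div_choose_succ (k : ℕ) :
    Tendsto (fun n : ℕ => (n.choose k : ℝ) / n.choose (k + 1)) atTop (𝓝 0) := by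
  have h : Tendsto (fun n : ℕ => ((k : ℝ) + 1) / (n - k : ℕ)) atTop (𝓝 0) :=
    tendsto_const_nhds.div_atTop (tendsto_natCast_atTop_atTop.comp (tendsto_sub_atTop_nat k))
  refine h.congr' ?_
  filter_upwards [eventually_gt_atTop k, eventually_choose_ne_zero (k + 1)] with n hn hne
  have hpascal : (n.choose (k + 1) : ℝ) * (k + 1) = n.choose k * (n - k : ℕ) := by
    exact_mod_cast Nat.choose_succ_right_eq n k
  have hnk : ((n - k : ℕ) : ℝ) ≠ 0 := Nat.cast_ne_zero.2 (by omega)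
  field_simp
  linarith

lemma tendsto_choose_div_choose {m k : ℕ} (hmk : m ≤ k) :
    Tendsto (fun n : ℕ => (n.choose m : ℝ) / n.choose k) atTop
      (𝓝 (if m = k then 1 else 0)) := by
  induction k, hmk using Nat.le_induction with
  | base =>
    rw [if_pos rfl]
    refine tendsto_const_nhds.congr' ?_
    filter_upwards [eventually_choose_ne_zero m] with n hn
    exact (div_self hn).symm
  | succ k hmk ih =>
    rw [if_neg (by omega), ← mul_zero (if m = k then (1 : ℝ) else 0)]
    refine (ih.mul (tendsto_choose_div_choose_succ k)).congr' ?_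
    filter_upwards [eventually_choose_ne_zero k] with n hn
    exact div_mul_div_cancel₀ hn

lemma tendsto_sum_choose_mul_pow_div {lam : ℝ} (hlam : lam ≠ 0) {g : ℕ → ℝ} {k : ℕ}
    (hk : g k ≠ 0) (hg : ∀ t, k < t → g t = 0) (i : ℕ) :
    Tendsto (fun n : ℕ => (∑ m ∈ range (n + 1), (n.choose m : ℝ) * lam ^ (n - m) * g (i + m)) /
      (n.choose k * lam ^ (n - k) * g k)) atTop (𝓝 (if i = 0 then 1 else 0)) := by
  have hlim : Tendsto (fun n : ℕ => ∑ m ∈ range (k + 1),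
      (n.choose m : ℝ) / n.choose k * (lam ^ (k - m) * g (i + m) / g k)) atTop
      (𝓝 (∑ m ∈ range (k + 1), (if m = k then 1 else 0) * (lam ^ (k - m) * g (i + m) / g k))) :=
    tendsto_finsetSum _ fun m hm =>
      (tendsto_choose_div_choose (Nat.lt_succ_iff.1 (mem_range.1 hm))).mul_const _
  have hval : ∑ m ∈ range (k + 1),
      (if m = k then (1 : ℝ) else 0) * (lam ^ (k - m) * g (i + m) / g k) =
        if i = 0 then 1 else 0 := by
    simp only [ite_mul, one_mul, zero_mul, sum_ite_eq', mem_range, Nat.lt_succ_self, if_true,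
      Nat.sub_self, pow_zero]
    split_ifs with hi
    · simp [hi, hk]
    · simp [hg (i + k) (by omega)]
  rw [← hval]
  refine hlim.congr' ?_
  filter_upwards [eventually_ge_atTop k, eventually_choose_ne_zero k] with n hkn hchoose
  -- for `n ≥ k` only the terms `m ≤ k` survive, as `g` vanishes beyond `k`
  rw [← sum_subset (range_subset_range.2 (by omega : k + 1 ≤ n + 1)), sum_div]
  · refine sum_congr rfl fun m hm => ?_
    have hmk : m ≤ k := Nat.lt_succ_iff.1 (mem_range.1 hm)
    rw [← Nat.sub_add_sub_cancel hkn hmk, pow_add]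
    field_simp
  · intro m _ hm
    rw [hg (i + m) (by simp at hm; omega), mul_zero]

end Binomial

section ZeroExtend

variable {α : Type*} [Zero α] {d : ℕ}

def zeroExtend (v : Fin d → α) (t : ℕ) : α :=
  if h : t < d then v ⟨t, h⟩ else 0

lemma zeroExtend_of_le (v : Fin d → α) {t : ℕ} (ht : d ≤ t) : zeroExtend v t = 0 :=
  dif_neg (not_lt.2 ht)

lemma zeroExtend_val (v : Fin d → α) (i : Fin d) : zeroExtend v i = v i :=
  dif_pos i.isLt

lemma exists_max_zeroExtend_ne_zero {v : Fin d → α} (hv : v ≠ 0) :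
    ∃ k, zeroExtend v k ≠ 0 ∧ ∀ t, k < t → zeroExtend v t = 0 := by
  classical
  obtain ⟨i, hi⟩ := Function.ne_iff.1 hv
  refine ⟨Nat.findGreatest (fun t => zeroExtend v t ≠ 0) d,
    Nat.findGreatest_spec (P := fun t => zeroExtend v t ≠ 0) i.isLt.le
      (by simpa [zeroExtend_val] using hi), fun t ht => ?_⟩
  by_cases htd : t ≤ d
  · exact not_not.1 (Nat.findGreatest_is_greatest ht htd)
  · exact zeroExtend_of_le v (by omega)

end ZeroExtend

section JordanBlock

variable {d : ℕ}

lemma jordanBlock_eq_jordanBlock_zero_add_scalar (d : ℕ) (lam : ℝ) :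
    jordanBlock d lam = jordanBlock d 0 + scalar (Fin d) lam := by
  ext i j
  by_cases h : (j : ℕ) = i
  · obtain rfl : j = i := Fin.ext h
    simp [jordanBlock]
  · simp [jordanBlock, h, Fin.ext_iff, Ne.symm h]

lemma jordanBlock_zero_mulVec_apply (v : Fin d → ℝ) (i : Fin d) :
    (jordanBlock d 0 *ᵥ v) i = zeroExtend v (i + 1) := by
  simp only [mulVec, dotProduct, jordanBlock, of_apply]
  by_cases h : (i : ℕ) + 1 < d
  · rw [zeroExtend, dif_pos h, sum_eq_single ⟨i + 1, h⟩] <;> intros <;> simp_all [Fin.ext_iff]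
  · rw [zeroExtend_of_le v (not_lt.1 h)]
    refine sum_eq_zero fun j _ => ?_
    rw [if_neg (show (j : ℕ) ≠ i + 1 by omega), ite_self, zero_mul]

lemma jordanBlock_zero_pow_mulVec_apply (m : ℕ) (v : Fin d → ℝ) (i : Fin d) :
    (jordanBlock d 0 ^ m *ᵥ v) i = zeroExtend v (i + m) := by
  induction m generalizing i with
  | zero => simp [zeroExtend_val]
  | succ m ih =>
    rw [pow_succ', ← mulVec_mulVec, jordanBlock_zero_mulVec_apply]
    by_cases h : (i : ℕ) + 1 < d
    · rw [zeroExtend, dif_pos h, ih, add_assoc, add_comm 1]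
    · rw [zeroExtend_of_le _ (not_lt.1 h), zeroExtend_of_le v (by omega)]

lemma jordanBlock_pow_mulVec_apply (lam : ℝ) (n : ℕ) (v : Fin d → ℝ) (i : Fin d) :
    (jordanBlock d lam ^ n *ᵥ v) i =
      ∑ m ∈ range (n + 1), (n.choose m : ℝ) * lam ^ (n - m) * zeroExtend v (i + m) := by
  rw [jordanBlock_eq_jordanBlock_zero_add_scalar,
    ((scalar_commute lam (fun _ => mul_comm _ _) _).symm).add_pow, sum_mulVec, Finset.sum_apply]
  refine sum_congr rfl fun m _ => ?_
  rw [← map_pow, scalar_apply, ← smul_one_eq_diagonal, ← nsmul_one, ← Nat.cast_smul_eq_nsmul ℝ]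
  simp only [Matrix.mul_smul, Matrix.mul_one, smul_mulVec, Pi.smul_apply, smul_eq_mul,
    jordanBlock_zero_pow_mulVec_apply]
  ring

end JordanBlock

theorem stmt3 (d : ℕ) (hd : 0 < d) (lam : ℝ) (hlam : lam ≠ 0)
    (x : EuclideanSpace ℝ (Fin d)) (hx : x ≠ 0) :
    Filter.Tendsto (fun n : ℕ =>
      min ‖‖(Matrix.toEuclideanLin ((jordanBlock d lam) ^ n)) x‖⁻¹ •
            (Matrix.toEuclideanLin ((jordanBlock d lam) ^ n)) x -
            EuclideanSpace.single (⟨0, hd⟩ : Fin d) (1 : ℝ)‖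
          ‖‖(Matrix.toEuclideanLin ((jordanBlock d lam) ^ n)) x‖⁻¹ •
            (Matrix.toEuclideanLin ((jordanBlock d lam) ^ n)) x +
            EuclideanSpace.single (⟨0, hd⟩ : Fin d) (1 : ℝ)‖)
      Filter.atTop (nhds 0) := by
  obtain ⟨k, hk, hgt⟩ := exists_max_zeroExtend_ne_zero (v := x.ofLp) (by simpa using hx)
  let c : ℕ → ℝ := fun n => n.choose k * lam ^ (n - k) * zeroExtend x.ofLp k
  have hc : ∀ᶠ n in atTop, c n ≠ 0 := by
    filter_upwards [eventually_choose_ne_zero k] with n hn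
    exact mul_ne_zero (mul_ne_zero hn (pow_ne_zero _ hlam)) hk
  refine tendsto_distUpToSign (by simp) hc (tendsto_euclideanSpace_iff.2 fun i => ?_)
  change Tendsto (fun n => (c n)⁻¹ * (jordanBlock d lam ^ n *ᵥ x.ofLp) i) atTop
    (𝓝 (EuclideanSpace.single (⟨0, hd⟩ : Fin d) (1 : ℝ) i))
  simp only [PiLp.single_apply, Fin.ext_iff, jordanBlock_pow_mulVec_apply, inv_mul_eq_div, c]
  exact tendsto_sum_choose_mul_pow_div hlam hk hgt i
end

section
/- Let J be a d×d Jordan block with real eigenvalue λ ≠ 0 and let x ∈ ℝ^d be nonzero. Then |⟨J^n x, e₁⟩| / (‖J^n x‖·‖e₁‖) → 1 as n → ∞. -/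
open Filter Polynomial Finset Topology
open scoped Matrix

section Alignment

variable {α E : Type*} [NormedAddCommGroup E] [InnerProductSpace ℝ E]

lemma abs_inner_div_norm_mul_norm_smul_left {c : ℝ} (hc : c ≠ 0) (v w : E) :
    |inner ℝ (c • v) w| / (‖c • v‖ * ‖w‖) = |inner ℝ v w| / (‖v‖ * ‖w‖) := by
  rw [real_inner_smul_left, abs_mul, norm_smul, Real.norm_eq_abs, mul_assoc,
    mul_div_mul_left _ _ (abs_ne_zero.2 hc)]

lemma tendsto_abs_inner_div_norm_mul_norm_of_smul_tendsto {l : Filter α} {v : α → E}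
    {c : α → ℝ} {w : E} (hw : w ≠ 0) (hc : ∀ᶠ a in l, c a ≠ 0)
    (hv : Tendsto (fun a => c a • v a) l (𝓝 w)) :
    Tendsto (fun a => |inner ℝ (v a) w| / (‖v a‖ * ‖w‖)) l (𝓝 1) := by
  have hw' : ‖w‖ * ‖w‖ ≠ 0 := by positivity
  have hcont : ContinuousAt (fun u : E => |inner ℝ u w| / (‖u‖ * ‖w‖)) w := by
    fun_prop (disch := exact hw')
  have hval : |inner ℝ w w| / (‖w‖ * ‖w‖) = 1 := by
    rw [real_inner_self_eq_norm_mul_norm, abs_of_nonneg (by positivity), div_self hw']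
  refine (hval ▸ hcont.tendsto.comp hv).congr' ?_
  filter_upwards [hc] with a ha
  exact abs_inner_div_norm_mul_norm_smul_left ha (v a) w

end Alignment

lemma PiLp.tendsto_nhds_iff {ι α : Type*} {p : ENNReal} {β : ι → Type*}
    [∀ i, TopologicalSpace (β i)] {l : Filter α} {u : α → PiLp p β} {v : PiLp p β} :
    Tendsto u l (𝓝 v) ↔ ∀ i, Tendsto (fun a => u a i) l (𝓝 (v i)) := by
  rw [nhds_induced, tendsto_comap_iff, tendsto_pi_nhds]
  rfl

lemma exists_ne_zero_and_eq_zero_of_gt {ι M : Type*} [Fintype ι] [LinearOrder ι] [Zero M]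
    {x : ι → M} (hx : x ≠ 0) : ∃ K, x K ≠ 0 ∧ ∀ j, K < j → x j = 0 := by
  classical
  obtain ⟨i, hi⟩ := Function.ne_iff.1 hx
  obtain ⟨K, hK, hmax⟩ := (univ.filter (x · ≠ 0)).exists_max_image id ⟨i, by simpa using hi⟩
  simp only [mem_filter, mem_univ, true_and, id] at hK hmax
  exact ⟨K, hK, fun j hj => by_contra fun h => (hmax j h).not_gt hj⟩

lemma tendsto_eval_div_eval_of_degree_lt {ι : Type*} [DecidableEq ι] {P : ι → ℝ[X]} {i₀ : ι}
    (hP : P i₀ ≠ 0) (hdeg : ∀ i ≠ i₀, (P i).degree < (P i₀).degree) (i : ι) :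
    Tendsto (fun t => (P i).eval t / (P i₀).eval t) atTop (𝓝 (if i = i₀ then 1 else 0)) := by
  split_ifs with hi
  · subst hi
    refine tendsto_const_nhds.congr' ?_
    filter_upwards [eventually_atTop_not_isRoot _ hP] with t ht
    exact (div_self ht).symm
  · exact div_tendsto_atTop_zero_of_degree_lt _ _ (hdeg i hi)

noncomputable def binomialPoly (m : ℕ) : ℝ[X] :=
  C (m.factorial : ℝ)⁻¹ * descPochhammer ℝ m

lemma binomialPoly_eval_natCast (m n : ℕ) : (binomialPoly m).eval (n : ℝ) = n.choose m := by
  rw [binomialPoly, eval_mul, eval_C, descPochhammer_eval_eq_descFactorial,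
    Nat.descFactorial_eq_factorial_mul_choose, Nat.cast_mul,
    inv_mul_cancel_left₀ (by exact_mod_cast m.factorial_ne_zero)]

lemma degree_binomialPoly (m : ℕ) : (binomialPoly m).degree = m := by
  rw [binomialPoly, degree_C_mul (inv_ne_zero (by exact_mod_cast m.factorial_ne_zero)),
    degree_eq_natDegree (monic_descPochhammer ℝ m).ne_zero, descPochhammer_natDegree]

lemma coeff_binomialPoly_self (m : ℕ) : (binomialPoly m).coeff m = (m.factorial : ℝ)⁻¹ := by
  have h := (monic_descPochhammer ℝ m).coeff_natDegree
  rw [descPochhammer_natDegree] at h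
  rw [binomialPoly, coeff_C_mul, h, mul_one]

def shiftMatrix (d : ℕ) : Matrix (Fin d) (Fin d) ℝ :=
  Matrix.of fun i j => if (j : ℕ) = (i : ℕ) + 1 then 1 else 0

lemma shiftMatrix_pow_apply (d m : ℕ) (i j : Fin d) :
    (shiftMatrix d ^ m) i j = if (j : ℕ) = i + m then 1 else 0 := by
  induction m generalizing i with
  | zero => simp [Matrix.one_apply, Fin.ext_iff, eq_comm]
  | succ m ih =>
    simp only [pow_succ', Matrix.mul_apply, ih]
    simp only [shiftMatrix, Matrix.of_apply, ite_mul, one_mul, zero_mul]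
    by_cases hi : (i : ℕ) + 1 < d
    · rw [Finset.sum_eq_single ⟨i + 1, hi⟩ (fun l _ hl => if_neg fun h => hl (Fin.ext h))
        (by simp), if_pos rfl]
      simp only [add_right_comm, add_assoc]
    · rw [Finset.sum_eq_zero fun l _ => if_neg (by omega), if_neg (by omega)]

lemma jordanBlock_eq_shiftMatrix_add (d : ℕ) (lam : ℝ) :
    jordanBlock d lam = shiftMatrix d + lam • 1 := by
  ext i j
  by_cases h : i = j
  · subst h
    simp [jordanBlock, shiftMatrix]
  · simp [jordanBlock, shiftMatrix, h, Fin.val_ne_of_ne (Ne.symm h)]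

lemma jordanBlock_pow_apply (d : ℕ) (lam : ℝ) (n : ℕ) (i j : Fin d) :
    (jordanBlock d lam ^ n) i j =
      if (i : ℕ) ≤ j then (n.choose (j - i) : ℝ) * lam ^ (n - (j - i)) else 0 := by
  rw [jordanBlock_eq_shiftMatrix_add, ((Commute.one_right _).smul_right lam).add_pow,
    Matrix.sum_apply]
  simp only [_root_.smul_pow, one_pow, Matrix.mul_smul, mul_one, ← nsmul_eq_mul',
    ← Nat.cast_smul_eq_nsmul ℝ, Matrix.smul_apply, smul_eq_mul, shiftMatrix_pow_apply]
  split_ifs with hij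
  · simp_rw [show ∀ m, ((j : ℕ) = i + m ↔ m = j - i) by omega, mul_ite, mul_one, mul_zero,
      Finset.sum_ite_eq', mem_range, ite_eq_left_iff, not_lt]
    intro hn
    rw [Nat.choose_eq_zero_of_lt (by omega), Nat.cast_zero, zero_mul]
  · exact Finset.sum_eq_zero fun m _ => by rw [if_neg (by omega), mul_zero, mul_zero]

section JordanOrbit

variable {d : ℕ} (lam : ℝ) (x : Fin d → ℝ)

noncomputable def jordanOrbitPoly (i : Fin d) : ℝ[X] :=
  ∑ j : Fin d, if (i : ℕ) ≤ j then (x j * lam⁻¹ ^ ((j : ℕ) - i)) • binomialPoly (j - i) else 0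

variable {lam x}

lemma jordanBlock_pow_mulVec_apply_s4 (hlam : lam ≠ 0) (n : ℕ) (i : Fin d) :
    (jordanBlock d lam ^ n *ᵥ x) i = lam ^ n * (jordanOrbitPoly lam x i).eval (n : ℝ) := by
  rw [Matrix.mulVec, dotProduct, jordanOrbitPoly, eval_finsetSum, Finset.mul_sum]
  refine Finset.sum_congr rfl fun j _ => ?_
  rw [jordanBlock_pow_apply]
  split_ifs with hij
  · rw [eval_smul, smul_eq_mul, binomialPoly_eval_natCast]
    rcases le_or_gt ((j : ℕ) - i) n with hn | hn
    · rw [pow_sub₀ lam hlam hn, inv_pow]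
      ring
    · rw [Nat.choose_eq_zero_of_lt hn, Nat.cast_zero]
      ring
  · simp

lemma degree_jordanOrbitPoly_lt {K : ℕ} (hK : ∀ j : Fin d, K < j → x j = 0) {i : Fin d}
    (hi : 0 < (i : ℕ)) : (jordanOrbitPoly lam x i).degree < K := by
  refine lt_of_le_of_lt (degree_sum_le _ _) ((Finset.sup_lt_iff (WithBot.bot_lt_coe K)).2 ?_)
  intro j _
  split_ifs with hij
  · rcases le_or_gt (j : ℕ) K with hjK | hjK
    · refine (degree_smul_le _ _).trans_lt ?_
      rw [degree_binomialPoly, Nat.cast_withBot]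
      exact WithBot.coe_lt_coe.2 (by omega)
    · simp [hK j hjK]
  · simp

lemma coeff_jordanOrbitPoly_of_val_eq_zero {K : Fin d} (hK : ∀ j, K < j → x j = 0) {i : Fin d}
    (hi : (i : ℕ) = 0) :
    (jordanOrbitPoly lam x i).coeff K = x K * lam⁻¹ ^ (K : ℕ) * ((K : ℕ).factorial : ℝ)⁻¹ := by
  rw [jordanOrbitPoly, finsetSum_coeff, Finset.sum_eq_single K]
  · rw [if_pos (by omega), coeff_smul, smul_eq_mul, hi, Nat.sub_zero, coeff_binomialPoly_self]
  · intro j _ hjK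
    split_ifs
    · rw [coeff_smul, smul_eq_mul, hi, Nat.sub_zero]
      rcases hjK.lt_or_gt with hj | hj
      · rw [coeff_eq_zero_of_degree_lt (by rw [degree_binomialPoly]; exact_mod_cast hj), mul_zero]
      · rw [hK j hj, zero_mul, zero_mul]
    · rw [coeff_zero]
  · simp

end JordanOrbit

theorem stmt4 (d : ℕ) (hd : 0 < d) (lam : ℝ) (hlam : lam ≠ 0)
    (x : EuclideanSpace ℝ (Fin d)) (hx : x ≠ 0) :
    Filter.Tendsto (fun n : ℕ =>
      |(inner ℝ ((Matrix.toEuclideanLin ((jordanBlock d lam) ^ n)) x)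
          (EuclideanSpace.single (⟨0, hd⟩ : Fin d) (1 : ℝ)) : ℝ)| /
        (‖(Matrix.toEuclideanLin ((jordanBlock d lam) ^ n)) x‖ *
          ‖EuclideanSpace.single (⟨0, hd⟩ : Fin d) (1 : ℝ)‖))
      Filter.atTop (nhds 1) := by
  obtain ⟨K, hxK, hK⟩ := exists_ne_zero_and_eq_zero_of_gt (x := ⇑x) (by simpa using hx)
  set i₀ : Fin d := ⟨0, hd⟩
  set P := jordanOrbitPoly lam ⇑x
  have hcoeff : (P i₀).coeff K ≠ 0 := by
    rw [coeff_jordanOrbitPoly_of_val_eq_zero hK rfl]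
    exact mul_ne_zero (mul_ne_zero hxK (by positivity)) (by positivity)
  have hP : P i₀ ≠ 0 := fun h => hcoeff (by rw [h, coeff_zero])
  have hdeg : ∀ i ≠ i₀, (P i).degree < (P i₀).degree := fun i hi =>
    (degree_jordanOrbitPoly_lt hK (Nat.pos_of_ne_zero fun h => hi (Fin.ext h))).trans_le
      (le_degree_of_ne_zero hcoeff)
  refine tendsto_abs_inner_div_norm_mul_norm_of_smul_tendsto
    (c := fun n : ℕ => (lam ^ n * (P i₀).eval (n : ℝ))⁻¹) (by simp) ?_ ?_
  · filter_upwards [tendsto_natCast_atTop_atTop.eventually (eventually_atTop_not_isRoot _ hP)]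
      with n hn
    exact inv_ne_zero (mul_ne_zero (pow_ne_zero n hlam) hn)
  · refine PiLp.tendsto_nhds_iff.2 fun i => ?_
    refine ((tendsto_eval_div_eval_of_degree_lt hP hdeg i).comp
      tendsto_natCast_atTop_atTop).congr (fun n => ?_) |>.trans_eq ?_
    · rw [Function.comp_apply, PiLp.smul_apply, smul_eq_mul]
      change _ = _ * (jordanBlock d lam ^ n *ᵥ x.ofLp) i
      rw [jordanBlock_pow_mulVec_apply_s4 hlam, mul_inv_rev, mul_assoc,
        inv_mul_cancel_left₀ (pow_ne_zero n hlam), inv_mul_eq_div]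
    · rw [PiLp.single_apply]
end
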